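/- arXiv:1511.02258 — 3 statements merged into one kernel-verified Lean document; each statement's English description precedes it below -/
import Mathlib

section
/- Let Φ be a D×N real matrix, σ > 0, and Σ_p a D×D symmetric positive definite real matrix. Define Σ := ((1/σ²)·Φ·Φᵀ + Σ_p⁻¹)⁻¹ and Σ_l := σ²·I_N + Φᵀ·Σ_p·Φ. Then Σ_l is invertible and Σ_l⁻¹ = (1/σ²)·(I_N − (1/σ²)·Φᵀ·Σ·Φ). -/
open Matrix

theorem stmt_3 (D N : ℕ) (Φ : Matrix (Fin D) (Fin N) ℝ) (σ : ℝ) (hσ : 0 < σ)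
    (Sp : Matrix (Fin D) (Fin D) ℝ) (hSp : Sp.PosDef)
    (S : Matrix (Fin D) (Fin D) ℝ)
    (hS : S = ((1 / σ ^ 2) • (Φ * Φᵀ) + Sp⁻¹)⁻¹)
    (Sl : Matrix (Fin N) (Fin N) ℝ)
    (hSl : Sl = σ ^ 2 • (1 : Matrix (Fin N) (Fin N) ℝ) + Φᵀ * Sp * Φ) :
    IsUnit Sl.det ∧
      Sl⁻¹ = (1 / σ ^ 2) •
        ((1 : Matrix (Fin N) (Fin N) ℝ) - (1 / σ ^ 2) • (Φᵀ * S * Φ)) := by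
  have hk : (σ : ℝ) ^ 2 ≠ 0 := pow_ne_zero _ hσ.ne'
  set A : Matrix (Fin D) (Fin D) ℝ := (1 / σ ^ 2) • (Φ * Φᵀ) + Sp⁻¹ with hA
  -- A is PosDef
  have hPhi : ((1 / σ ^ 2) • (Φ * Φᵀ)).PosSemidef := by
    have h1 : (((1 / σ) • Φ) * ((1 / σ) • Φ)ᵀ).PosSemidef := by
      have := Matrix.posSemidef_self_mul_conjTranspose ((1 / σ) • Φ)
      simpa using this
    have h2 : ((1 / σ) • Φ) * ((1 / σ) • Φ)ᵀ = (1 / σ ^ 2) • (Φ * Φᵀ) := by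
      rw [Matrix.transpose_smul, Matrix.smul_mul, Matrix.mul_smul, smul_smul]
      ring_nf
    rwa [h2] at h1
  have hApd : A.PosDef := Matrix.PosDef.posSemidef_add hPhi hSp.inv
  have hAdet : IsUnit A.det := isUnit_iff_ne_zero.mpr hApd.det_pos.ne'
  have hAS : A * S = 1 := by rw [hS]; exact Matrix.mul_nonsing_inv A hAdet
  have hSpinv : Sp * Sp⁻¹ = 1 := Matrix.mul_nonsing_inv Sp
    (isUnit_iff_ne_zero.mpr hSp.det_pos.ne')
  -- Key: Sp * (Φ * Φᵀ) * S = σ² • Sp - σ² • S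
  have hPhiPhi : Φ * Φᵀ = σ ^ 2 • A - σ ^ 2 • Sp⁻¹ := by
    rw [hA, smul_add, smul_smul]
    field_simp
    rw [one_smul, add_sub_cancel_right]
  have key : Sp * (Φ * Φᵀ) * S = σ ^ 2 • Sp - σ ^ 2 • S := by
    rw [hPhiPhi, Matrix.mul_sub, Matrix.mul_smul, Matrix.mul_smul,
      Matrix.sub_mul, Matrix.smul_mul, Matrix.smul_mul, Matrix.mul_assoc, hAS,
      mul_one, hSpinv, Matrix.one_mul]
  -- key2 : ΦᵀSpΦΦᵀSΦ = σ²•(ΦᵀSpΦ) - σ²•(ΦᵀSΦ)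
  have key2 : Φᵀ * Sp * Φ * (Φᵀ * S * Φ) = σ ^ 2 • (Φᵀ * Sp * Φ) - σ ^ 2 • (Φᵀ * S * Φ) := by
    have : Φᵀ * Sp * Φ * (Φᵀ * S * Φ) = Φᵀ * (Sp * (Φ * Φᵀ) * S) * Φ := by
      simp only [Matrix.mul_assoc]
    rw [this, key]
    simp only [Matrix.mul_sub, Matrix.sub_mul, Matrix.mul_smul, Matrix.smul_mul,
      Matrix.mul_assoc]
  have hmul : Sl * ((1 / σ ^ 2) •
      ((1 : Matrix (Fin N) (Fin N) ℝ) - (1 / σ ^ 2) • (Φᵀ * S * Φ))) = 1 := by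
    rw [hSl, Matrix.mul_smul, Matrix.add_mul, Matrix.mul_sub, Matrix.mul_sub,
      Matrix.mul_one, Matrix.mul_one, Matrix.mul_smul, Matrix.mul_smul,
      Matrix.smul_mul, Matrix.one_mul, key2]
    have e : (1 / σ ^ 2) * σ ^ 2 = 1 := by field_simp
    simp only [smul_smul, e, one_smul, smul_sub, smul_add]
    abel
  refine ⟨?_, ?_⟩
  · exact Matrix.isUnit_det_of_right_inverse hmul
  · exact Matrix.inv_eq_right_inv hmul
end

section
/- Let Φ be a D×N real matrix, σ > 0, Σ_p a D×D symmetric positive definite real matrix, and y ∈ ℝᴺ. Define Σ := ((1/σ²)·Φ·Φᵀ + Σ_p⁻¹)⁻¹, Σ_l := σ²·I_N + Φᵀ·Σ_p·Φ, and w̄ := (1/σ²)·Σ·Φ·y. Then yᵀ·Σ_l⁻¹·y = (1/σ²)·(y − Φᵀ·w̄)ᵀ·y. -/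
open Matrix

theorem stmt_6 (D N : ℕ) (Φ : Matrix (Fin D) (Fin N) ℝ) (σ : ℝ) (hσ : 0 < σ)
    (Sp : Matrix (Fin D) (Fin D) ℝ) (hSp : Sp.PosDef) (y : Fin N → ℝ)
    (S : Matrix (Fin D) (Fin D) ℝ)
    (hS : S = ((1 / σ ^ 2) • (Φ * Φᵀ) + Sp⁻¹)⁻¹)
    (Sl : Matrix (Fin N) (Fin N) ℝ)
    (hSl : Sl = σ ^ 2 • (1 : Matrix (Fin N) (Fin N) ℝ) + Φᵀ * Sp * Φ)
    (w : Fin D → ℝ) (hw : w = (1 / σ ^ 2) • (S *ᵥ (Φ *ᵥ y))) :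
    y ⬝ᵥ (Sl⁻¹ *ᵥ y) = (1 / σ ^ 2) * ((y - Φᵀ *ᵥ w) ⬝ᵥ y) := by
  have hσ2 : σ ^ 2 ≠ 0 := pow_ne_zero _ hσ.ne'
  set c : ℝ := 1 / σ ^ 2 with hc
  have hcσ : c * σ ^ 2 = 1 := by rw [hc]; field_simp
  set A : Matrix (Fin D) (Fin D) ℝ := c • (Φ * Φᵀ) + Sp⁻¹ with hA
  -- A is positive definite
  have hPS : (c • (Φ * Φᵀ)).PosSemidef := by
    have h1 : (Φ * Φᴴ).PosSemidef := posSemidef_self_mul_conjTranspose Φ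
    rw [conjTranspose_eq_transpose_of_trivial] at h1
    refine ⟨?_, fun x => ?_⟩
    · show (c • (Φ * Φᵀ))ᴴ = c • (Φ * Φᵀ)
      rw [conjTranspose_smul, star_trivial, h1.1]
    · have h2 := h1.2 x
      have hc0 : 0 ≤ c := by rw [hc]; positivity
      simp only [Matrix.smul_apply, smul_eq_mul] at h2 ⊢
      have e : (x.sum fun i xi ↦ x.sum fun j xj ↦ star xi * (c * (Φ * Φᵀ) i j) * xj)
          = c * (x.sum fun i xi ↦ x.sum fun j xj ↦ star xi * (Φ * Φᵀ) i j * xj) := by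
        simp only [Finsupp.mul_sum]; congr 1; ext i xi; congr 1; ext j xj; ring
      rw [e]; positivity
  have hApd : A.PosDef := Matrix.PosDef.posSemidef_add hPS hSp.inv
  have hAS : A * S = 1 := by
    rw [hS]
    exact mul_nonsing_inv _ hApd.det_pos.ne'.isUnit
  have hSpInv : Sp * Sp⁻¹ = 1 := mul_nonsing_inv _ hSp.det_pos.ne'.isUnit
  have hΦΦ : Φ * Φᵀ = σ ^ 2 • (A - Sp⁻¹) := by
    rw [hA, add_sub_cancel_right, smul_smul, mul_comm, hcσ, one_smul]
  have e2 : Sp * ((A - Sp⁻¹) * S) = Sp - S := by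
    rw [Matrix.sub_mul, Matrix.mul_sub, hAS, Matrix.mul_one, ← Matrix.mul_assoc, hSpInv,
      Matrix.one_mul]
  have hmid : Φᵀ * Sp * Φ * (Φᵀ * S * Φ) = σ ^ 2 • (Φᵀ * Sp * Φ - Φᵀ * S * Φ) := by
    have e1 : Φᵀ * Sp * Φ * (Φᵀ * S * Φ) = Φᵀ * (Sp * ((Φ * Φᵀ) * S)) * Φ := by
      simp only [Matrix.mul_assoc]
    rw [e1, hΦΦ, Matrix.smul_mul, Matrix.mul_smul, e2, Matrix.mul_smul, Matrix.smul_mul,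
      Matrix.mul_sub, Matrix.sub_mul]
  have hSlT : Sl * (Φᵀ * S * Φ) = σ ^ 2 • (Φᵀ * Sp * Φ) := by
    rw [hSl, Matrix.add_mul, Matrix.smul_mul, Matrix.one_mul, hmid, smul_sub]
    abel
  have key : Sl * (c • ((1 : Matrix (Fin N) (Fin N) ℝ) - c • (Φᵀ * S * Φ))) = 1 := by
    rw [Matrix.mul_smul, Matrix.mul_sub, Matrix.mul_one, Matrix.mul_smul, hSlT, smul_smul,
      hcσ, one_smul, hSl, add_sub_cancel_right, smul_smul, hcσ, one_smul]
  have hSlinv : Sl⁻¹ = c • ((1 : Matrix (Fin N) (Fin N) ℝ) - c • (Φᵀ * S * Φ)) :=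
    inv_eq_right_inv key
  have hΦw : Φᵀ *ᵥ w = c • ((Φᵀ * S * Φ) *ᵥ y) := by
    rw [hw, mulVec_smul]
    congr 1
    rw [mulVec_mulVec, mulVec_mulVec]
  rw [hSlinv, smul_mulVec, sub_mulVec, one_mulVec, smul_mulVec, ← hΦw,
    dotProduct_smul, smul_eq_mul, dotProduct_comm]
end

section
/- Let Φ be a D×N real matrix, σ > 0, Σ_p a D×D symmetric positive definite real matrix, and y ∈ ℝᴺ. Define Σ := ((1/σ²)·Φ·Φᵀ + Σ_p⁻¹)⁻¹, Σ_l := σ²·I_N + Φᵀ·Σ_p·Φ, and w̄ := (1/σ²)·Σ·Φ·y. Then −(1/2)·yᵀ·Σ_l⁻¹·y − (1/2)·log det(Σ_l) − (N/2)·log(2π) = −(1/(2σ²))·(y − Φᵀ·w̄)ᵀ·y − (1/2)·log det(Σ⁻¹) − (1/2)·log det(Σ_p) − (N/2)·log(2πσ²). -/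
open Matrix Real

theorem stmt_7 (D N : ℕ) (Φ : Matrix (Fin D) (Fin N) ℝ) (σ : ℝ) (hσ : 0 < σ)
    (Sp : Matrix (Fin D) (Fin D) ℝ) (hSp : Sp.PosDef) (y : Fin N → ℝ)
    (S : Matrix (Fin D) (Fin D) ℝ)
    (hS : S = ((1 / σ ^ 2) • (Φ * Φᵀ) + Sp⁻¹)⁻¹)
    (Sl : Matrix (Fin N) (Fin N) ℝ)
    (hSl : Sl = σ ^ 2 • (1 : Matrix (Fin N) (Fin N) ℝ) + Φᵀ * Sp * Φ)
    (w : Fin D → ℝ) (hw : w = (1 / σ ^ 2) • (S *ᵥ (Φ *ᵥ y))) :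
    -(1 / 2) * (y ⬝ᵥ (Sl⁻¹ *ᵥ y)) - (1 / 2) * Real.log Sl.det
        - (N / 2) * Real.log (2 * Real.pi)
      = -(1 / (2 * σ ^ 2)) * ((y - Φᵀ *ᵥ w) ⬝ᵥ y)
        - (1 / 2) * Real.log (S⁻¹).det - (1 / 2) * Real.log Sp.det
        - (N / 2) * Real.log (2 * Real.pi * σ ^ 2) := by
  have hσ2 : (0:ℝ) < σ ^ 2 := by positivity
  set A : Matrix (Fin D) (Fin D) ℝ := (1 / σ ^ 2) • (Φ * Φᵀ) + Sp⁻¹ with hA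
  -- A is positive definite
  have hFFt : ((1 / σ ^ 2) • (Φ * Φᵀ)).PosSemidef := by
    have h := posSemidef_self_mul_conjTranspose ((1/σ) • Φ)
    have he : ((1/σ) • Φ) * ((1/σ) • Φ)ᴴ = (1 / σ ^ 2) • (Φ * Φᵀ) := by
      rw [conjTranspose_smul, Matrix.smul_mul, Matrix.mul_smul, smul_smul,
        conjTranspose_eq_transpose_of_trivial]
      congr 1
      simp
      ring
    rwa [he] at h
  have hApd : A.PosDef := Matrix.PosDef.posSemidef_add hFFt hSp.inv
  have hAdet : IsUnit A.det := hApd.det_pos.ne'.isUnit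
  have hSpdet : IsUnit Sp.det := hSp.det_pos.ne'.isUnit
  have hAS : A * S = 1 := by rw [hS]; exact Matrix.mul_nonsing_inv _ hAdet
  have hSinv : S⁻¹ = A := by rw [hS, Matrix.nonsing_inv_nonsing_inv _ hAdet]
  -- key identity: Sp = (1/σ²)•(Sp*Φ*Φᵀ*S) + S
  have hkey : Sp = (1 / σ ^ 2) • (Sp * (Φ * (Φᵀ * S))) + S := by
    have h1 : Sp * (A * S) = Sp := by rw [hAS, Matrix.mul_one]
    calc Sp = Sp * (A * S) := h1.symm
      _ = (1 / σ ^ 2) • (Sp * (Φ * (Φᵀ * S))) + S := by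
          rw [hA, Matrix.add_mul, Matrix.mul_add, Matrix.smul_mul, Matrix.mul_smul,
            Matrix.mul_nonsing_inv_cancel_left _ _ hSpdet]
          simp only [Matrix.mul_assoc]
  -- inverse of Sl
  have hSlinv : Sl⁻¹ = (1 / σ ^ 2) • ((1 : Matrix (Fin N) (Fin N) ℝ)
      - (1 / σ ^ 2) • (Φᵀ * S * Φ)) := by
    apply inv_eq_right_inv
    rw [hSl]
    have hPS : Φᵀ * (Sp * Φ) = Φᵀ * (S * Φ)
        + (1 / σ ^ 2) • (Φᵀ * (Sp * (Φ * (Φᵀ * (S * Φ))))) := by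
      nth_rewrite 1 [hkey]
      simp only [Matrix.add_mul, Matrix.mul_add, Matrix.smul_mul, Matrix.mul_smul,
        Matrix.mul_assoc]
      rw [add_comm]
    have hss : (1 / σ ^ 2) * σ ^ 2 = 1 := by field_simp
    simp only [Matrix.mul_smul, Matrix.smul_mul, Matrix.mul_add, Matrix.add_mul,
      Matrix.mul_sub, Matrix.sub_mul, smul_smul, smul_sub, smul_add, Matrix.mul_one,
      Matrix.one_mul, Matrix.mul_assoc]
    rw [hPS, hss]
    have hσne : σ ≠ 0 := hσ.ne'
    match_scalars <;> field_simp <;> ring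
  -- quadratic form
  have hquad : y ⬝ᵥ (Sl⁻¹ *ᵥ y) = (1 / σ ^ 2) * ((y - Φᵀ *ᵥ w) ⬝ᵥ y) := by
    rw [hSlinv, hw]
    simp only [smul_mulVec, sub_mulVec, one_mulVec, dotProduct_smul, dotProduct_sub,
      sub_dotProduct, smul_dotProduct, mulVec_smul, mulVec_mulVec]
    rw [dotProduct_comm y ((Φᵀ * S * Φ) *ᵥ y)]
    simp only [smul_eq_mul, Matrix.mul_assoc]
    try ring
  -- determinant of Sl
  have hdet : Sl.det = (σ ^ 2) ^ N * (Sp.det * A.det) := by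
    have h1 : Sl = σ ^ 2 • ((1 : Matrix (Fin N) (Fin N) ℝ) + Φᵀ * ((1 / σ ^ 2) • (Sp * Φ))) := by
      rw [hSl, smul_add]
      congr 1
      rw [Matrix.mul_smul, smul_smul]
      have : σ ^ 2 * (1 / σ ^ 2) = 1 := by field_simp
      rw [this, one_smul, Matrix.mul_assoc]
    rw [h1, det_smul, Fintype.card_fin, det_one_add_mul_comm]
    congr 1
    have h2 : (1 : Matrix (Fin D) (Fin D) ℝ) + (1 / σ ^ 2) • (Sp * Φ) * Φᵀ = Sp * A := by
      rw [hA, Matrix.mul_add, Matrix.mul_smul, Matrix.mul_nonsing_inv _ hSpdet,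
        Matrix.smul_mul, Matrix.mul_assoc]
      rw [add_comm]
    rw [h2, det_mul]
  -- now the log computation
  rw [hquad, hdet, hSinv]
  have hlog : Real.log ((σ ^ 2) ^ N * (Sp.det * A.det))
      = N * Real.log (σ ^ 2) + Real.log Sp.det + Real.log A.det := by
    rw [Real.log_mul (by positivity) (mul_pos hSp.det_pos hApd.det_pos).ne',
      Real.log_mul hSp.det_pos.ne' hApd.det_pos.ne', Real.log_pow]
    norm_num
    ring
  have hlog2 : Real.log (2 * Real.pi * σ ^ 2) = Real.log (2 * Real.pi) + Real.log (σ ^ 2) :=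
    Real.log_mul (by positivity) hσ2.ne'
  rw [hlog, hlog2]
  ring
end
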